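/- arXiv:1604.08875 — 4 statements merged into one kernel-verified Lean document; each statement's English description precedes it below -/
import Mathlib

section
/- Let M ⊕ N ↪ L be a primitive extension of lattices and let f_M ∈ O(M), f_N ∈ O(N) be isometries with minimal polynomials m(x) and n(x). If f_M ⊕ f_N extends to an isometry of L, then dL ⊆ M ⊕ N, where d is the positive generator of the ideal (m(x)ℤ[x] + n(x)ℤ[x]) ∩ ℤ. -/
/-!
If `c • x ∈ M ⊕ N` with `c ≠ 0`, then `c • m(f) x = m(f) (c • x) ∈ N`, because `m(f)` kills `M`
and preserves `N`; primitivity of `N` gives `m(f) x ∈ N`, and symmetrically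
`n(f) x ∈ M`. Writing `d = u m + v n` then exhibits `d • x = v(f) n(f) x + u(f) m(f) x` as an
element of `M ⊕ N`.
-/

open Polynomial

section

variable {R L : Type*} [CommSemiring R] [AddCommMonoid L] [Module R L]
  {A : Module.End R L} {M N : Submodule R L}

theorem aeval_restrict_apply (hA : ∀ x ∈ M, A x ∈ M) (p : R[X]) (x : M) :
    (aeval (A.restrict hA) p x : L) = aeval A p x := by
  induction p using Polynomial.induction_on' with
  | add p q hp hq => simp [hp, hq]
  | monomial k c => simp [Module.End.pow_restrict k]

theorem aeval_apply_mem_of_smul_mem_sup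
    (hNsat : ∀ (y : L) (c : R), c ≠ 0 → c • y ∈ N → y ∈ N) (hAN : ∀ y ∈ N, A y ∈ N)
    {p : R[X]} (hpM : ∀ y ∈ M, aeval A p y = 0) {x : L} {c : R} (hc : c ≠ 0)
    (hx : c • x ∈ M ⊔ N) : aeval A p x ∈ N := by
  obtain ⟨a, ha, b, hb, hab⟩ := Submodule.mem_sup.mp hx
  refine hNsat _ c hc ?_
  rw [← map_smul, ← hab, map_add, hpM a ha, zero_add]
  exact aeval_apply_smul_mem_of_le_comap hb p A hAN

theorem smul_mem_sup_of_C_mem_span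
    (hMsat : ∀ (x : L) (c : R), c ≠ 0 → c • x ∈ M → x ∈ M)
    (hNsat : ∀ (y : L) (c : R), c ≠ 0 → c • y ∈ N → y ∈ N)
    (hindex : ∀ x : L, ∃ c : R, c ≠ 0 ∧ c • x ∈ M ⊔ N)
    (hAM : ∀ x ∈ M, A x ∈ M) (hAN : ∀ y ∈ N, A y ∈ N) {p q : R[X]}
    (hpM : ∀ x ∈ M, aeval A p x = 0) (hqN : ∀ y ∈ N, aeval A q y = 0) {d : R}
    (hd : C d ∈ Ideal.span {p, q}) (x : L) : d • x ∈ M ⊔ N := by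
  obtain ⟨u, v, huv⟩ := Ideal.mem_span_pair.mp hd
  obtain ⟨c, hc, hcx⟩ := hindex x
  have hpx : aeval A p x ∈ N := aeval_apply_mem_of_smul_mem_sup hNsat hAN hpM hc hcx
  have hqx : aeval A q x ∈ M :=
    aeval_apply_mem_of_smul_mem_sup hMsat hAM hqN hc (sup_comm M N ▸ hcx)
  have hdx : d • x = aeval A u (aeval A p x) + aeval A v (aeval A q x) := by
    rw [← Module.algebraMap_end_apply R R L d x, ← aeval_C A d, ← huv]
    simp only [map_add, map_mul, LinearMap.add_apply, Module.End.mul_apply]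
  rw [hdx, add_comm]
  exact Submodule.add_mem_sup (aeval_apply_smul_mem_of_le_comap hqx v A hAM)
    (aeval_apply_smul_mem_of_le_comap hpx u A hAN)

end

theorem aeval_minpoly_restrict_apply {R L : Type*} [CommRing R] [AddCommGroup L] [Module R L]
    {A : Module.End R L} {M : Submodule R L} (hA : ∀ x ∈ M, A x ∈ M) {x : L} (hx : x ∈ M) :
    aeval A (minpoly R (A.restrict hA)) x = 0 := by
  rw [← aeval_restrict_apply hA _ ⟨x, hx⟩, minpoly.aeval, LinearMap.zero_apply,
    Submodule.coe_zero]

theorem stmt2_general {L : Type*} [AddCommGroup L] [Module ℤ L]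
    (f : L ≃ₗ[ℤ] L)
    (M N : Submodule ℤ L)
    (hMprim : ∀ (x : L) (c : ℤ), c ≠ 0 → c • x ∈ M → x ∈ M)
    (hNprim : ∀ (x : L) (c : ℤ), c ≠ 0 → c • x ∈ N → x ∈ N)
    (hindex : ∀ x : L, ∃ c : ℤ, c ≠ 0 ∧ c • x ∈ M ⊔ N)
    (hfM : ∀ x ∈ M, f.toLinearMap x ∈ M) (hfN : ∀ y ∈ N, f.toLinearMap y ∈ N)
    (m n : Polynomial ℤ)
    (hm : m = minpoly ℤ (f.toLinearMap.restrict hfM))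
    (hn : n = minpoly ℤ (f.toLinearMap.restrict hfN))
    (d : ℤ)
    (hgen : ∀ c : ℤ, Polynomial.C c ∈ Ideal.span ({m, n} : Set (Polynomial ℤ)) ↔ d ∣ c) :
    ∀ x : L, d • x ∈ M ⊔ N := by
  subst hm hn
  -- `c • x` in the statement is `zsmul`, not the action of the given `Module ℤ L`, and
  -- `minpoly ℤ` uses `Ring.toIntAlgebra`; both agree with the instances of the lemmas up to
  -- subsingleton instance types.
  obtain rfl := Subsingleton.elim ‹Module ℤ L› (AddCommGroup.toIntModule L)
  exact smul_mem_sup_of_C_mem_span hMprim hNprim hindex hfM hfN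
    (fun _ => aeval_minpoly_restrict_apply hfM) (fun _ => aeval_minpoly_restrict_apply hfN)
    (by convert (hgen d).mpr dvd_rfl)

/-- Let `M ⊕ N ↪ L` be a primitive extension of lattices (`M`, `N` primitive
sublattices of the lattice `L` which are mutually orthogonal complements, with `M ⊕ N` of
finite index in `L`), and `f_M ∈ O(M)`, `f_N ∈ O(N)` isometries with minimal polynomials
`m(x)` and `n(x)`.  If `f_M ⊕ f_N` extends to an isometry `f` of `L`, then `d L ⊆ M ⊕ N`,
where `d ≥ 0` is the generator of the ideal `(m(x)ℤ[x] + n(x)ℤ[x]) ∩ ℤ`. -/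
theorem stmt2 {L : Type*} [AddCommGroup L] [Module ℤ L]
    [Module.Free ℤ L] [Module.Finite ℤ L]
    (Φ : L →ₗ[ℤ] L →ₗ[ℤ] ℤ)
    (hsymm : ∀ x y : L, Φ x y = Φ y x)
    (hnd : ∀ x : L, (∀ y : L, Φ x y = 0) → x = 0)
    (f : L ≃ₗ[ℤ] L) (hisom : ∀ x y : L, Φ (f x) (f y) = Φ x y)
    (M N : Submodule ℤ L)
    (hMprim : ∀ (x : L) (c : ℤ), c ≠ 0 → c • x ∈ M → x ∈ M)
    (hNprim : ∀ (x : L) (c : ℤ), c ≠ 0 → c • x ∈ N → x ∈ N)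
    (hNcompl : ∀ y : L, y ∈ N ↔ ∀ x ∈ M, Φ x y = 0)
    (hMcompl : ∀ x : L, x ∈ M ↔ ∀ y ∈ N, Φ x y = 0)
    (hindex : ∀ x : L, ∃ c : ℤ, c ≠ 0 ∧ c • x ∈ M ⊔ N)
    (hfM : ∀ x ∈ M, f.toLinearMap x ∈ M) (hfN : ∀ y ∈ N, f.toLinearMap y ∈ N)
    (m n : Polynomial ℤ)
    (hm : m = minpoly ℤ (f.toLinearMap.restrict hfM))
    (hn : n = minpoly ℤ (f.toLinearMap.restrict hfN))
    (d : ℤ) (hd : 0 ≤ d)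
    (hgen : ∀ c : ℤ, Polynomial.C c ∈ Ideal.span ({m, n} : Set (Polynomial ℤ)) ↔ d ∣ c) :
    ∀ x : L, d • x ∈ M ⊔ N :=
  stmt2_general f M N hMprim hNprim hindex hfM hfN m n hm hn d hgen
end

section
/- For integers 0 < m < n, the ideal (ℤ[x]·c_n + ℤ[x]·c_m) ∩ ℤ equals pℤ if n/m is a power of a prime p, and equals ℤ otherwise. -/
open Polynomial

/-!
Let `I = (Φ_n, Φ_m) ⊆ ℤ[X]`. Since `Φ_n` and `Φ_m` are coprime over `ℚ`, `I` contains a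
nonzero integer. Modulo a prime `q`, `Φ_{q^a k} ≡ Φ_k ^ i` with `i > 0` whenever `q ∤ k`, and
the `Φ_k` with `q ∤ k` are pairwise coprime, being factors of a separable `X^N - 1`. Hence if
`n / m` is not a power of `q`, then `I + (q) = ℤ[X]`; if this holds for every prime `q`, a
nonzero integer in `I` is a product of units modulo `I`, so `I = ℤ[X]`.
If `n = m p^e`, both generators are divisible by `Φ_{m'}` modulo `p` (`m'` the prime-to-`p`
part of `m`), so `I ∩ ℤ ⊆ pℤ`. Conversely `Φ_n ∣ Φ_{p^e}(X^m)`, which is congruent to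
`Φ_{p^e}(1) = p` modulo `X^m - 1`, a multiple of `Φ_m`.
-/

namespace Ideal

variable {R : Type*} [CommRing R] {I : Ideal R}

theorem sup_span_natCast_eq_top (hI : ∀ q : ℕ, q.Prime → I ⊔ span {(q : R)} = ⊤) {N : ℕ}
    (hN : N ≠ 0) : I ⊔ span {(N : R)} = ⊤ := by
  induction N using Nat.recOnMul with
  | zero => exact absurd rfl hN
  | one => simp
  | prime p hp => exact hI p hp
  | mul a b iha ihb =>
    rw [Nat.cast_mul, ← span_singleton_mul_span_singleton,
      sup_mul_eq_of_coprime_left (iha (left_ne_zero_of_mul hN))]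
    exact ihb (right_ne_zero_of_mul hN)

theorem eq_top_of_intCast_mem (hI : ∀ q : ℕ, q.Prime → I ⊔ span {(q : R)} = ⊤) {N : ℤ}
    (hN : N ≠ 0) (hNI : (N : R) ∈ I) : I = ⊤ := by
  have hnatAbs : (N.natAbs : R) ∈ I := by
    rcases Int.natAbs_eq N with h | h <;> rw [h] at hNI
    · rwa [Int.cast_natCast] at hNI
    · rwa [Int.cast_neg, Int.cast_natCast, neg_mem_iff] at hNI
  rw [← sup_eq_left.mpr ((span_singleton_le_iff_mem I).mpr hnatAbs)]
  exact sup_span_natCast_eq_top hI (Int.natAbs_ne_zero.mpr hN)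

end Ideal

theorem Nat.exists_eq_mul_pow_of_ordCompl_eq {p m n : ℕ} (h : ordCompl[p] n = ordCompl[p] m)
    (hmn : m < n) : ∃ e, 0 < e ∧ n = m * p ^ e := by
  set a := n.factorization p
  set b := m.factorization p
  have hn : p ^ a * ordCompl[p] n = n := Nat.ordProj_mul_ordCompl_eq_self n p
  have hm : p ^ b * ordCompl[p] n = m := h ▸ Nat.ordProj_mul_ordCompl_eq_self m p
  have hba : b < a := by
    by_contra! hab
    have hm0 : m = 0 :=
      Nat.eq_zero_of_dvd_of_lt (hn ▸ hm ▸ mul_dvd_mul_right (pow_dvd_pow p hab) _) hmn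
    have hpos := Nat.ordCompl_pos p (n := n) (by omega)
    rw [h, hm0] at hpos
    simp at hpos
  refine ⟨a - b, by omega, ?_⟩
  rw [← hn, ← hm, mul_right_comm, ← pow_add, Nat.add_sub_cancel' hba.le]

namespace Polynomial

theorem exists_ne_zero_C_mem_span_pair_of_isCoprime_map {R K : Type*} [CommRing R]
    [IsDomain R] [Field K] [Algebra R K] [IsFractionRing R K] {f g : R[X]}
    (h : IsCoprime (f.map (algebraMap R K)) (g.map (algebraMap R K))) :
    ∃ r : R, r ≠ 0 ∧ C r ∈ Ideal.span {f, g} := by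
  obtain ⟨u, v, huv⟩ := h
  obtain ⟨a, ha, hu⟩ := IsLocalization.integerNormalization_spec (nonZeroDivisors R) u
  obtain ⟨b, hb, hv⟩ := IsLocalization.integerNormalization_spec (nonZeroDivisors R) v
  refine ⟨a * b, mul_ne_zero (nonZeroDivisors.ne_zero ha) (nonZeroDivisors.ne_zero hb),
    Ideal.mem_span_pair.mpr ⟨C b * IsLocalization.integerNormalization (nonZeroDivisors R) u,
      C a * IsLocalization.integerNormalization (nonZeroDivisors R) v, ?_⟩⟩
  apply map_injective (algebraMap R K) (IsFractionRing.injective R K)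
  rw [← algebraMap_smul K a u, smul_eq_C_mul] at hu
  rw [← algebraMap_smul K b v, smul_eq_C_mul] at hv
  simp only [Polynomial.map_add, Polynomial.map_mul, map_C, hu, hv, map_mul]
  linear_combination (C (algebraMap R K a) * C (algebraMap R K b)) * huv

theorem span_pair_sup_span_natCast_eq_top {q : ℕ} {f g : ℤ[X]}
    (h : IsCoprime (f.map (Int.castRingHom (ZMod q))) (g.map (Int.castRingHom (ZMod q)))) :
    Ideal.span {f, g} ⊔ Ideal.span {(q : ℤ[X])} = ⊤ := by
  set φ := mapRingHom (Int.castRingHom (ZMod q))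
  have hφ : Function.Surjective φ := map_surjective _ ZMod.intCast_surjective
  have hker : RingHom.ker φ = Ideal.span {(q : ℤ[X])} := by
    simp [φ, ker_mapRingHom, ZMod.ker_intCastRingHom, Ideal.map_span]
  have hmap : (Ideal.span {f, g}).map φ = ⊤ := by
    rw [Ideal.map_span, Set.image_pair, Ideal.eq_top_iff_one]
    exact Ideal.mem_span_pair.mpr h
  rw [← hker, RingHom.ker_eq_comap_bot, ← Ideal.comap_map_of_surjective _ hφ, hmap,
    Ideal.comap_top]

theorem cyclotomic_mul_cyclotomic_dvd_X_pow_sub_one {R : Type*} [CommRing R] {a b : ℕ}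
    (hab : a ≠ b) (ha : a ≠ 0) (hb : b ≠ 0) :
    cyclotomic a R * cyclotomic b R ∣ X ^ (a * b) - 1 := by
  have hsub : ({a, b} : Finset ℕ) ⊆ (a * b).divisors := by
    simp [Finset.insert_subset_iff, ha, hb]
  have := Finset.prod_dvd_prod_of_subset _ _ (fun i ↦ cyclotomic i R) hsub
  rwa [Finset.prod_pair hab, prod_cyclotomic_eq_X_pow_sub_one (by positivity)] at this

theorem isCoprime_cyclotomic_of_ne {K : Type*} [Field K] {a b : ℕ} (hab : a ≠ b)
    (ha : (a : K) ≠ 0) (hb : (b : K) ≠ 0) : IsCoprime (cyclotomic a K) (cyclotomic b K) := by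
  have hsep : (X ^ (a * b) - 1 : K[X]).Separable := by
    rw [X_pow_sub_one_separable_iff, Nat.cast_mul]
    exact mul_ne_zero ha hb
  exact (hsep.of_dvd (cyclotomic_mul_cyclotomic_dvd_X_pow_sub_one hab
    (by rintro rfl; simp at ha) (by rintro rfl; simp at hb))).isCoprime

theorem exists_cyclotomic_eq_cyclotomic_ordCompl_pow {p : ℕ} [Fact p.Prime] (R : Type*) [Ring R]
    [CharP R p] (n : ℕ) : ∃ i, 0 < i ∧ cyclotomic n R = cyclotomic (ordCompl[p] n) R ^ i := by
  rcases eq_or_ne n 0 with rfl | hn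
  · exact ⟨1, one_pos, by simp⟩
  set k := n.factorization p
  set m := ordCompl[p] n
  rw [← show p ^ k * m = n from Nat.ordProj_mul_ordCompl_eq_self n p]
  rcases Nat.eq_zero_or_pos k with hk | hk
  · exact ⟨1, one_pos, by simp [hk]⟩
  refine ⟨p ^ k - p ^ (k - 1), ?_,
    cyclotomic_mul_prime_pow_eq R (Nat.not_dvd_ordCompl Fact.out hn) hk⟩
  have : p ^ (k - 1) < p ^ k := Nat.pow_lt_pow_right (Fact.out : p.Prime).one_lt (by omega)
  omega

theorem isCoprime_cyclotomic_of_ordCompl_ne {K : Type*} [Field K] {p : ℕ} [Fact p.Prime]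
    [CharP K p] {n m : ℕ} (hn : n ≠ 0) (hm : m ≠ 0) (h : ordCompl[p] n ≠ ordCompl[p] m) :
    IsCoprime (cyclotomic n K) (cyclotomic m K) := by
  obtain ⟨i, -, hcn⟩ := exists_cyclotomic_eq_cyclotomic_ordCompl_pow K n
  obtain ⟨j, -, hcm⟩ := exists_cyclotomic_eq_cyclotomic_ordCompl_pow K m
  rw [hcn, hcm]
  refine (isCoprime_cyclotomic_of_ne h ?_ ?_).pow <;> rw [Ne, CharP.cast_eq_zero_iff K p]
  exacts [Nat.not_dvd_ordCompl Fact.out hn, Nat.not_dvd_ordCompl Fact.out hm]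

theorem dvd_of_C_mem_span_cyclotomic_mul_prime_pow {p : ℕ} [hp : Fact p.Prime] {m : ℕ}
    (hm : m ≠ 0) (e : ℕ) {c : ℤ}
    (hc : C c ∈ Ideal.span {cyclotomic (m * p ^ e) ℤ, cyclotomic m ℤ}) : (p : ℤ) ∣ c := by
  obtain ⟨a, b, hab⟩ := Ideal.mem_span_pair.mp hc
  have hmod := congrArg (map (Int.castRingHom (ZMod p))) hab
  simp only [Polynomial.map_add, Polynomial.map_mul, map_cyclotomic, map_C] at hmod
  obtain ⟨i, hi, hcn⟩ := exists_cyclotomic_eq_cyclotomic_ordCompl_pow (ZMod p) (m * p ^ e)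
  obtain ⟨j, hj, hcm⟩ := exists_cyclotomic_eq_cyclotomic_ordCompl_pow (ZMod p) m
  rw [Nat.ordCompl_mul, Nat.ordCompl_self_pow hp.out, mul_one] at hcn
  have hdvd : cyclotomic (ordCompl[p] m) (ZMod p) ∣ C (c : ZMod p) := by
    rw [← eq_intCast (Int.castRingHom (ZMod p)), ← hmod, hcn, hcm]
    exact dvd_add (dvd_mul_of_dvd_right (dvd_pow_self _ hi.ne') _)
      (dvd_mul_of_dvd_right (dvd_pow_self _ hj.ne') _)
  have hdeg := degree_cyclotomic_pos _ (ZMod p) (Nat.ordCompl_pos p hm)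
  rw [← ZMod.intCast_zmod_eq_zero_iff_dvd]
  by_contra hc0
  exact not_isUnit_of_degree_pos _ hdeg
    (isUnit_of_dvd_unit hdvd (isUnit_C.mpr (IsUnit.mk0 _ hc0)))

theorem cyclotomic_mul_dvd_expand_cyclotomic (d k : ℕ) :
    cyclotomic (d * k) ℤ ∣ expand ℤ d (cyclotomic k ℤ) := by
  rcases Nat.eq_zero_or_pos (d * k) with hdk | hdk
  · simp [hdk]
  obtain ⟨μ, hμ⟩ : ∃ μ : ℂ, IsPrimitiveRoot μ (d * k) :=
    ⟨_, Complex.isPrimitiveRoot_exp _ hdk.ne'⟩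
  rw [cyclotomic_eq_minpoly hμ hdk]
  refine minpoly.isIntegrallyClosed_dvd (hμ.isIntegral hdk) ?_
  rw [expand_aeval, aeval_def, eval₂_eq_eval_map, map_cyclotomic]
  exact (hμ.pow hdk rfl).isRoot_cyclotomic (Nat.pos_of_mul_pos_left hdk)

theorem C_eval_one_cyclotomic_mem_span (d k : ℕ) :
    C ((cyclotomic k ℤ).eval 1) ∈ Ideal.span {cyclotomic (d * k) ℤ, cyclotomic d ℤ} := by
  obtain ⟨a, ha⟩ := cyclotomic_mul_dvd_expand_cyclotomic d k
  obtain ⟨b, hb⟩ : X ^ d - 1 ∣ expand ℤ d (cyclotomic k ℤ) - C ((cyclotomic k ℤ).eval 1) := by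
    simpa using
      _root_.map_dvd (expand ℤ d) (X_sub_C_dvd_sub_C_eval (p := cyclotomic k ℤ) (a := 1))
  obtain ⟨c, hc⟩ := cyclotomic.dvd_X_pow_sub_one d ℤ
  rw [Ideal.mem_span_pair]
  exact ⟨a, -(c * b), by linear_combination hb + b * hc - ha⟩

end Polynomial

/-- For `0 < m < n`, the ideal `(ℤ[x]·c_n + ℤ[x]·c_m) ∩ ℤ` equals `pℤ`
if `n / m` is a power of a prime `p`, and equals `ℤ` otherwise. -/
theorem stmt5 (n m : ℕ) (h0 : 0 < m) (hmn : m < n) :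
    (∀ p e : ℕ, p.Prime → 0 < e → n = m * p ^ e →
      ∀ c : ℤ, C c ∈ Ideal.span ({cyclotomic n ℤ, cyclotomic m ℤ} : Set (Polynomial ℤ)) ↔ (p : ℤ) ∣ c) ∧
    ((¬ ∃ p e : ℕ, p.Prime ∧ 0 < e ∧ n = m * p ^ e) →
      ∀ c : ℤ, C c ∈ Ideal.span ({cyclotomic n ℤ, cyclotomic m ℤ} : Set (Polynomial ℤ))) := by
  refine ⟨fun p e hp he hn c ↦ ?_, fun hne c ↦ ?_⟩
  · have := Fact.mk hp
    subst hn
    refine ⟨dvd_of_C_mem_span_cyclotomic_mul_prime_pow h0.ne' e, ?_⟩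
    rintro ⟨d, rfl⟩
    obtain ⟨k, rfl⟩ := Nat.exists_eq_succ_of_ne_zero he.ne'
    have hp_mem := C_eval_one_cyclotomic_mem_span m (p ^ (k + 1))
    rw [eval_one_cyclotomic_prime_pow] at hp_mem
    rw [C_mul]
    exact Ideal.mul_mem_right _ _ hp_mem
  · have hsup_prime : ∀ q : ℕ, q.Prime → Ideal.span {cyclotomic n ℤ, cyclotomic m ℤ} ⊔
        Ideal.span {(q : ℤ[X])} = ⊤ := by
      intro q hq
      have := Fact.mk hq
      refine span_pair_sup_span_natCast_eq_top ?_
      rw [map_cyclotomic, map_cyclotomic]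
      refine isCoprime_cyclotomic_of_ordCompl_ne (by omega) h0.ne' fun h ↦ hne ?_
      obtain ⟨e, he, hn⟩ := Nat.exists_eq_mul_pow_of_ordCompl_eq h hmn
      exact ⟨q, e, hq, he, hn⟩
    obtain ⟨N, hN, hNmem⟩ := exists_ne_zero_C_mem_span_pair_of_isCoprime_map (K := ℚ)
      (f := cyclotomic n ℤ) (g := cyclotomic m ℤ)
      (by simpa only [map_cyclotomic] using cyclotomic.isCoprime_rat hmn.ne')
    simp [Ideal.eq_top_of_intCast_mem hsup_prime hN (by rwa [← eq_intCast C])]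
end

section
/- Let L be an even lattice (x² ∈ 2ℤ for all x ∈ L) and a ∈ End(L) a self-adjoint endomorphism (⟨ax, y⟩ = ⟨x, ay⟩ for all x, y). Then the twisted form ⟨x, y⟩_a := ⟨ax, y⟩ is again even, i.e. ⟨x, x⟩_a ∈ 2ℤ for all x ∈ L, provided a lies in ℤ[f + f⁻¹] for some isometry f of L. -/
/-!
Put `s = f + f⁻¹`; it is self-adjoint because `f⁻¹` is the adjoint of the isometry `f`.
Hence `⟨s^(2k) x, x⟩ = ⟨s^k x, s^k x⟩` and `⟨s^(2k+1) x, x⟩ = ⟨s y, y⟩` with `y = s^k x`, and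
`⟨s y, y⟩ = ⟨f y, y⟩ + ⟨y, f y⟩` is the cross term of `⟨(f + 1) y, (f + 1) y⟩`, so all of these
are even. Since `a ↦ ⟨a x, x⟩` is additive, evenness passes to every `a ∈ ℤ[s]`.
-/

namespace LinearMap

variable {R M : Type*} [CommRing R] [AddCommGroup M] [Module R M] (B : LinearMap.BilinForm R M)

lemma isAdjointPair_symm_of_isOrthogonal {f : M ≃ₗ[R] M} (hf : B.IsOrthogonal f) :
    IsAdjointPair B B f f.symm :=
  (LinearEquiv.isAdjointPair_symm_iff (f := f.toEquiv)).mpr hf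

lemma isOrthogonal_symm {f : M ≃ₗ[R] M} (hf : B.IsOrthogonal f) : B.IsOrthogonal f.symm :=
  fun x y ↦ by rw [← hf, f.apply_symm_apply, f.apply_symm_apply]

lemma isSelfAdjoint_add_symm {f : M ≃ₗ[R] M} (hf : B.IsOrthogonal f) :
    B.IsSelfAdjoint ⇑(f.toLinearMap + f.symm.toLinearMap) := by
  have hsymm := B.isAdjointPair_symm_of_isOrthogonal (B.isOrthogonal_symm hf)
  rw [f.symm_symm] at hsymm
  intro x y
  simpa [add_comm] using (B.isAdjointPair_symm_of_isOrthogonal hf).add hsymm x y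

variable {B} in
lemma IsSelfAdjoint.pow {s : Module.End R M} (hs : B.IsSelfAdjoint s) (n : ℕ) :
    B.IsSelfAdjoint ⇑(s ^ n) := by
  induction n with
  | zero => exact isAdjointPair_one
  | succ n ih =>
    rw [LinearMap.IsSelfAdjoint, pow_succ]
    simpa only [← pow_succ, ← pow_succ'] using ih.mul hs

lemma dvd_apply_add_symm_self {d : R} (hB : ∀ x, d ∣ B x x) {f : M ≃ₗ[R] M}
    (hf : B.IsOrthogonal f) (x : M) : d ∣ B ((f.toLinearMap + f.symm.toLinearMap) x) x := by
  have hsymm : B (f.symm x) x = B x (f x) := by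
    simpa using B.isAdjointPair_symm_of_isOrthogonal (B.isOrthogonal_symm hf) x x
  have hpolar : B ((f.toLinearMap + f.symm.toLinearMap) x) x
      = B (f x + x) (f x + x) - B (f x) (f x) - B x x := by
    simp only [add_apply, LinearEquiv.coe_coe, map_add, hsymm]
    ring
  rw [hpolar]
  exact ((hB _).sub (hB _)).sub (hB _)

lemma dvd_apply_pow_self {d : R} (hB : ∀ x, d ∣ B x x) {s : Module.End R M}
    (hs : B.IsSelfAdjoint s) (hsB : ∀ x, d ∣ B (s x) x) (n : ℕ) (x : M) :
    d ∣ B ((s ^ n) x) x := by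
  obtain ⟨k, rfl | rfl⟩ := n.even_or_odd'
  · rw [two_mul, pow_add, Module.End.mul_apply, hs.pow k]
    exact hB _
  · rw [two_mul, add_assoc, pow_add, pow_succ', Module.End.mul_apply, hs.pow k]
    exact hsB _

lemma dvd_apply_self_of_mem_adjoin {d : R} (hB : ∀ x, d ∣ B x x) {s : Module.End R M}
    (hs : B.IsSelfAdjoint s) (hsB : ∀ x, d ∣ B (s x) x) {a : Module.End R M}
    (ha : a ∈ Algebra.adjoin ℤ {s}) (x : M) : d ∣ B (a x) x := by
  rw [← Subalgebra.mem_toSubmodule, Algebra.adjoin_eq_span, ← Submonoid.powers_eq_closure] at ha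
  induction ha using Submodule.span_induction with
  | mem _ hpow =>
    obtain ⟨n, rfl⟩ := hpow
    exact B.dvd_apply_pow_self hB hs hsB n x
  | zero => simp
  | add _ _ _ _ ha hb => simpa using ha.add hb
  | smul c _ _ ha => simpa using ha.mul_left c

end LinearMap

theorem stmt8_general {L : Type*} [AddCommGroup L] [Module ℤ L]
    (Φ : L →ₗ[ℤ] L →ₗ[ℤ] ℤ)
    (heven : ∀ x : L, (2 : ℤ) ∣ Φ x x)
    (f : L ≃ₗ[ℤ] L) (hisom : ∀ x y : L, Φ (f x) (f y) = Φ x y)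
    (a : Module.End ℤ L)
    (ha : a ∈ Algebra.adjoin ℤ
      ({f.toLinearMap + f.symm.toLinearMap} : Set (Module.End ℤ L))) :
    ∀ x : L, (2 : ℤ) ∣ Φ (a x) x :=
  Φ.dvd_apply_self_of_mem_adjoin heven (Φ.isSelfAdjoint_add_symm hisom)
    (Φ.dvd_apply_add_symm_self heven hisom) ha

/-- Let `L` be an even lattice and `f` an isometry of `L`.  If
`a ∈ ℤ[f + f⁻¹] ⊆ End(L)` (such endomorphisms are self-adjoint), then the twisted
form `⟨x, y⟩_a = ⟨a x, y⟩` is again even: `⟨x, x⟩_a ∈ 2ℤ` for all `x ∈ L`. -/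
theorem stmt8 {L : Type*} [AddCommGroup L] [Module ℤ L]
    (Φ : L →ₗ[ℤ] L →ₗ[ℤ] ℤ)
    (hsymm : ∀ x y : L, Φ x y = Φ y x)
    (heven : ∀ x : L, (2 : ℤ) ∣ Φ x x)
    (f : L ≃ₗ[ℤ] L) (hisom : ∀ x y : L, Φ (f x) (f y) = Φ x y)
    (a : Module.End ℤ L)
    (hself : ∀ x y : L, Φ (a x) y = Φ x (a y))
    (ha : a ∈ Algebra.adjoin ℤ
      ({f.toLinearMap + f.symm.toLinearMap} : Set (Module.End ℤ L))) :
    ∀ x : L, (2 : ℤ) ∣ Φ (a x) x :=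
  stmt8_general Φ heven f hisom a ha
end

section
/- Let (A, a) be a g-lattice where A is a lattice carrying the structure of an 𝒪_K-module via a, with 𝒪_K = ℤ[x]/p(x) the ring of integers of a CM field K with class number one, and suppose (A, a) is isomorphic to a twist L₀(t) of the principal p(x)-lattice. Then every automorphism h of (A, a) (an isometry commuting with a) is a unit of 𝒪_K of absolute value 1 at every archimedean place, hence a root of unity; therefore Aut(A, a) = ⟨±a⟩ when the roots of unity in K are generated by −1 and the image of x. -/
/-! If `h` preserves the trace form `(g₁, g₂) ↦ Tr(c g₁ σ g₂)`, then `Tr(c (h σh - 1) g) = 0` for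
every `g`, so nondegeneracy of the trace forces `h σh = 1`. As `σ` is complex conjugation under
every embedding, `|φ h|² = φ (h σh) = 1` for all `φ : K →+* ℂ`, and Kronecker's theorem makes the
algebraic integer `h` a root of unity. -/

open ComplexConjugate

theorem mul_map_self_eq_one_of_preserves_trace_form {R K : Type*} [CommRing R] [Field K] [Algebra R K]
    (σ : K ≃ₐ[R] K) {c h : K} (hc : c ≠ 0)
    (hnd : ∀ z : K, z ≠ 0 → ∃ w : K, Algebra.trace R K (z * w) ≠ 0)
    (hisom : ∀ g₁ g₂ : K,
      Algebra.trace R K (c * (h * g₁) * σ (h * g₂)) = Algebra.trace R K (c * g₁ * σ g₂)) :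
    h * σ h = 1 := by
  by_contra hne
  obtain ⟨w, hw⟩ := hnd _ (mul_ne_zero hc (sub_ne_zero.mpr hne))
  apply hw
  calc Algebra.trace R K (c * (h * σ h - 1) * w)
      = Algebra.trace R K (c * (h * w) * σ (h * 1)) - Algebra.trace R K (c * w * σ 1) := by
        rw [← map_sub, map_mul σ, map_one]
        ring_nf
    _ = 0 := by rw [hisom, sub_self]

theorem Complex.norm_eq_one_of_mul_conj_eq_one {z : ℂ} (hz : z * conj z = 1) : ‖z‖ = 1 := by
  rw [Complex.mul_conj, ← Complex.ofReal_one, Complex.ofReal_inj, Complex.normSq_eq_norm_sq,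
    pow_eq_one_iff_of_nonneg (norm_nonneg z) two_ne_zero] at hz
  exact hz

theorem norm_embedding_eq_one_of_mul_map_eq_one {K : Type*} [Field K] {σ : K →+* K}
    (hconj : ∀ φ : K →+* ℂ, ∀ z : K, φ (σ z) = conj (φ z)) {h : K} (hh : h * σ h = 1)
    (φ : K →+* ℂ) : ‖φ h‖ = 1 :=
  Complex.norm_eq_one_of_mul_conj_eq_one (by rw [← hconj, ← map_mul, hh, map_one])

theorem stmt10_general {K : Type*} [Field K] [NumberField K]
    (σ : K ≃ₐ[ℚ] K) (c θ : K) (hc : c ≠ 0)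
    (hCM : ∀ φ : K →+* ℂ, ∀ z : K, φ (σ z) = (starRingEnd ℂ) (φ z))
    (hnd : ∀ z : K, z ≠ 0 → ∃ w : K, Algebra.trace ℚ K (z * w) ≠ 0)
    (hroots : ∀ z : K, (∃ k : ℕ, 0 < k ∧ z ^ k = 1) → ∃ m : ℤ, z = θ ^ m ∨ z = -θ ^ m)
    (h : K) (hint : IsIntegral ℤ h)
    (hisom : ∀ g₁ g₂ : K,
      Algebra.trace ℚ K (c * (h * g₁) * σ (h * g₂)) = Algebra.trace ℚ K (c * g₁ * σ g₂)) :
    (∃ k : ℕ, 0 < k ∧ h ^ k = 1) ∧ ∃ m : ℤ, h = θ ^ m ∨ h = -θ ^ m := by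
  have hunit : h * σ h = 1 := mul_map_self_eq_one_of_preserves_trace_form σ hc hnd hisom
  obtain ⟨k, hk, hpow⟩ := NumberField.Embeddings.pow_eq_one_of_norm_eq_one K ℂ hint
    (norm_embedding_eq_one_of_mul_map_eq_one (σ := (σ : K →+* K)) hCM hunit)
  exact ⟨⟨k, hk, hpow⟩, hroots h ⟨k, hk, hpow⟩⟩

/-- Let `(A, a)` be a `p(x)`-lattice isomorphic to a twist of the principal
`p(x)`-lattice, so that automorphisms of `(A, a)` are elements `h` of `K^×` which are
integral over `ℤ` and preserve the trace form `⟨g₁,g₂⟩ = Tr^K_ℚ(c g₁ g₂^σ)` (`c` absorbing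
the twist and `r'(x+x⁻¹)`).  Here `K` is a CM field with involution `σ` (complex conjugation
under every complex embedding) and `θ` the image of `x`.  Then any such `h` has `h h^σ = 1`,
hence absolute value `1` at every archimedean place, hence is a root of unity (Kronecker);
therefore if the roots of unity of `K` are generated by `-1` and `θ`, then `h = ±θ^m`,
i.e. `Aut(A, a) = ⟨± a⟩`. -/
theorem stmt10 {K : Type*} [Field K] [NumberField K]
    (σ : K ≃ₐ[ℚ] K) (c θ : K) (hc : c ≠ 0) (hσc : σ c = c)
    (hσθ : σ θ = θ⁻¹) (hθint : IsIntegral ℤ θ) (hθ0 : θ ≠ 0)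
    (hCM : ∀ φ : K →+* ℂ, ∀ z : K, φ (σ z) = (starRingEnd ℂ) (φ z))
    (hnd : ∀ z : K, z ≠ 0 → ∃ w : K, Algebra.trace ℚ K (z * w) ≠ 0)
    (hroots : ∀ z : K, (∃ k : ℕ, 0 < k ∧ z ^ k = 1) → ∃ m : ℤ, z = θ ^ m ∨ z = -θ ^ m)
    (h : K) (hne : h ≠ 0) (hint : IsIntegral ℤ h)
    (hisom : ∀ g₁ g₂ : K,
      Algebra.trace ℚ K (c * (h * g₁) * σ (h * g₂)) = Algebra.trace ℚ K (c * g₁ * σ g₂)) :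
    (∃ k : ℕ, 0 < k ∧ h ^ k = 1) ∧ ∃ m : ℤ, h = θ ^ m ∨ h = -θ ^ m :=
  stmt10_general σ c θ hc hCM hnd hroots h hint hisom
end
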